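/- arXiv:1409.2325 — 4 statements merged into one kernel-verified Lean document; each statement's English description precedes it below -/
import Mathlib

section
/- The set of lines {v ∈ L : B(v,v) = −1, B(v,K) = −1, B(v,C) = 0} is finite and has exactly 27 elements. -/
noncomputable section
namespace ADEPaper

/-- The Picard lattice `L = ℤ^{n+2}` with basis `h = e 0`, `lᵢ = e i` for `1 ≤ i ≤ n+1`. -/
abbrev L (n : ℕ) : Type := Fin (n + 2) → ℤ

/-- The intersection form: `B(h,h) = 1`, `B(lᵢ,lᵢ) = -1`, distinct basis vectors orthogonal. -/
def B (n : ℕ) (v w : L n) : ℤ :=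
  v 0 * w 0 - ∑ i : Fin (n + 1), v i.succ * w i.succ

/-- The canonical class `K = -3h + l₁ + ⋯ + l_{n+1}`. -/
def K (n : ℕ) : L n := fun j => if j = 0 then -3 else 1

/-- `C = l_{n+1}`, the exceptional curve of the `Eₙ`-surface. -/
def C (n : ℕ) : L n := fun j => if j = Fin.last (n + 1) then 1 else 0

lemma hB (v w : L 6) : B 6 v w
    = v 0*w 0 - (v 1*w 1 + v 2*w 2 + v 3*w 3 + v 4*w 4 + v 5*w 5 + v 6*w 6 + v 7*w 7) := by
  rw [B, Fin.sum_univ_seven]; rfl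

lemma coordBound (d a b c e f g : ℤ)
    (h1 : d*d - (a*a+b*b+c*c+e*e+f*f+g*g) = -1)
    (h2 : a+b+c+e+f+g = 1 - 3*d) (hd0 : 0 ≤ d) (hd2 : d ≤ 2) :
    -1 ≤ a ∧ a ≤ 1 := by
  constructor
  · by_contra hc
    push_neg at hc
    have ha : a ≤ -2 := by linarith
    nlinarith [sq_nonneg (b-c), sq_nonneg (b-e), sq_nonneg (b-f), sq_nonneg (b-g),
      sq_nonneg (c-e), sq_nonneg (c-f), sq_nonneg (c-g), sq_nonneg (e-f), sq_nonneg (e-g),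
      sq_nonneg (f-g), sq_nonneg (8*d-18),
      mul_nonneg (by linarith : (0:ℤ) ≤ -(a+2)) (by linarith : (0:ℤ) ≤ 14-6*a-6*d)]
  · by_contra hc
    push_neg at hc
    have ha : 2 ≤ a := by linarith
    nlinarith [sq_nonneg (b-c), sq_nonneg (b-e), sq_nonneg (b-f), sq_nonneg (b-g),
      sq_nonneg (c-e), sq_nonneg (c-f), sq_nonneg (c-g), sq_nonneg (e-f), sq_nonneg (e-g),
      sq_nonneg (f-g), sq_nonneg d,
      mul_nonneg (by linarith : (0:ℤ) ≤ a-2) (by linarith : (0:ℤ) ≤ 6*a+6*d+10)]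

lemma dBound (d a b c e f g : ℤ)
    (h1 : d*d - (a*a+b*b+c*c+e*e+f*f+g*g) = -1)
    (h2 : a+b+c+e+f+g = 1 - 3*d) : 0 ≤ d ∧ d ≤ 2 := by
  have hcs : 3*d*d - 6*d - 5 ≤ 0 := by
    nlinarith [sq_nonneg (a-b), sq_nonneg (a-c), sq_nonneg (a-e), sq_nonneg (a-f), sq_nonneg (a-g),
      sq_nonneg (b-c), sq_nonneg (b-e), sq_nonneg (b-f), sq_nonneg (b-g),
      sq_nonneg (c-e), sq_nonneg (c-f), sq_nonneg (c-g), sq_nonneg (e-f), sq_nonneg (e-g),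
      sq_nonneg (f-g)]
  constructor
  · by_contra hc; push_neg at hc
    nlinarith [sq_nonneg (d+1)]
  · by_contra hc; push_neg at hc
    nlinarith [sq_nonneg (d-3)]

/-- A bounding box for the lines. -/
def lineLo : L 6 := fun i => if i = 0 then 0 else if i = 7 then 0 else -1

def lineHi : L 6 := fun i => if i = 0 then 2 else if i = 7 then 0 else 1

/-- The candidate finite set of lines. -/
def lineFinset : Finset (L 6) := (Finset.Icc lineLo lineHi).filter
  (fun v => B 6 v v = -1 ∧ B 6 v (K 6) = -1 ∧ B 6 v (C 6) = 0)

lemma lines_eq_finset :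
    {v : L 6 | B 6 v v = -1 ∧ B 6 v (K 6) = -1 ∧ B 6 v (C 6) = 0} = ↑lineFinset := by
  ext v
  simp only [Set.mem_setOf_eq, lineFinset, Finset.coe_filter, Finset.mem_Icc]
  constructor
  · rintro h
    refine ⟨?_, h⟩
    obtain ⟨h1, h2, h3⟩ := h
    rw [hB] at h1 h2 h3
    simp only [K, C,
      show (1:Fin 8) ≠ 0 by decide, show (2:Fin 8) ≠ 0 by decide, show (3:Fin 8) ≠ 0 by decide,
      show (4:Fin 8) ≠ 0 by decide, show (5:Fin 8) ≠ 0 by decide, show (6:Fin 8) ≠ 0 by decide,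
      show (7:Fin 8) ≠ 0 by decide, show (0:Fin 8) = 0 from rfl,
      show (1:Fin 8) ≠ Fin.last 7 by decide, show (2:Fin 8) ≠ Fin.last 7 by decide,
      show (3:Fin 8) ≠ Fin.last 7 by decide, show (4:Fin 8) ≠ Fin.last 7 by decide,
      show (5:Fin 8) ≠ Fin.last 7 by decide, show (6:Fin 8) ≠ Fin.last 7 by decide,
      show (0:Fin 8) ≠ Fin.last 7 by decide,
      show (if (7:Fin 8) = 0 then (-3:ℤ) else 1) = 1 by decide,
      show (if (7:Fin 8) = Fin.last 7 then (1:ℤ) else 0) = 1 by decide,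
      if_true, if_false, ite_true, ite_false, ne_eq, not_false_eq_true] at h2 h3
    have h70 : v 7 = 0 := by linarith
    rw [h70] at h1 h2
    have e1 : v 0 * v 0 - (v 1*v 1 + v 2*v 2 + v 3*v 3 + v 4*v 4 + v 5*v 5 + v 6*v 6) = -1 := by
      linarith
    have e2 : v 1 + v 2 + v 3 + v 4 + v 5 + v 6 = 1 - 3 * v 0 := by linarith
    have hd := dBound (v 0) (v 1) (v 2) (v 3) (v 4) (v 5) (v 6) (by linarith) (by linarith)
    have c1 := coordBound (v 0) (v 1) (v 2) (v 3) (v 4) (v 5) (v 6)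
      (by linarith) (by linarith) hd.1 hd.2
    have c2 := coordBound (v 0) (v 2) (v 1) (v 3) (v 4) (v 5) (v 6)
      (by linarith) (by linarith) hd.1 hd.2
    have c3 := coordBound (v 0) (v 3) (v 1) (v 2) (v 4) (v 5) (v 6)
      (by linarith) (by linarith) hd.1 hd.2
    have c4 := coordBound (v 0) (v 4) (v 1) (v 2) (v 3) (v 5) (v 6)
      (by linarith) (by linarith) hd.1 hd.2
    have c5 := coordBound (v 0) (v 5) (v 1) (v 2) (v 3) (v 4) (v 6)
      (by linarith) (by linarith) hd.1 hd.2
    have c6 := coordBound (v 0) (v 6) (v 1) (v 2) (v 3) (v 4) (v 5)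
      (by linarith) (by linarith) hd.1 hd.2
    constructor
    · intro i
      fin_cases i
      · exact hd.1
      · exact c1.1
      · exact c2.1
      · exact c3.1
      · exact c4.1
      · exact c5.1
      · exact c6.1
      · exact le_of_eq h70.symm
    · intro i
      fin_cases i
      · exact hd.2
      · exact c1.2
      · exact c2.2
      · exact c3.2
      · exact c4.2
      · exact c5.2
      · exact c6.2
      · exact le_of_eq h70
  · rintro ⟨-, h⟩
    exact h

set_option maxRecDepth 100000 in
set_option maxHeartbeats 4000000 in
lemma lineFinset_card : lineFinset.card = 27 := by decide

/-- The set of lines on an `E_6`-surface, i.e. classes `v` with `B(v,v) = B(v,K) = -1`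
and `B(v,C) = 0`, is finite with exactly 27 elements. -/
theorem E6_lines_card :
    {v : L 6 | B 6 v v = -1 ∧ B 6 v (K 6) = -1 ∧ B 6 v (C 6) = 0}.Finite ∧
    {v : L 6 | B 6 v v = -1 ∧ B 6 v (K 6) = -1 ∧ B 6 v (C 6) = 0}.ncard
      = 27 := by
  rw [lines_eq_finset]
  exact ⟨lineFinset.finite_toSet, by rw [Set.ncard_coe_finset, lineFinset_card]⟩

end ADEPaper
end
end

section
/- The set of lines {v ∈ L : B(v,v) = −1, B(v,K) = −1, B(v,C) = 0} is finite and has exactly 56 elements. -/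
noncomputable section
namespace ADEPaper

/-!
Write a class with vanishing `l₈`-coefficient (forced by `B(v, C) = 0`) as `v = a h + ∑ xᵢ lᵢ`;
then `v` is a line iff `∑ xᵢ = 1 - 3a` and `∑ xᵢ² = a² + 1`. Cauchy–Schwarz over all seven
coordinates gives `0 ≤ a ≤ 3`, and over the six coordinates other than `xᵢ` it confines `xᵢ` to two
consecutive values; the linear condition then fixes how many coordinates take the larger one.
So the lines of degree `a = 0, 1, 2, 3` correspond to the subsets of `{1, …, 7}` of size
`1, 5, 2, 6`, and there are `7 + 21 + 21 + 7 = 56` of them.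
-/

open Finset

section

variable {n : ℕ}

def IsLine (v : L n) : Prop :=
  B n v v = -1 ∧ B n v (K n) = -1 ∧ B n v (C n) = 0

/-- The class `a h + ∑ xᵢ lᵢ` with vanishing `l_{n+1}`-coefficient. -/
def ofCoords (a : ℤ) (x : Fin n → ℤ) : L n := Fin.cons a (Fin.snoc x 0)

lemma ofCoords_inj {a b : ℤ} {x y : Fin n → ℤ} :
    ofCoords a x = ofCoords b y ↔ a = b ∧ x = y := by
  simp only [ofCoords, Fin.cons_inj, Fin.snoc_inj, and_true]

lemma eq_ofCoords {v : L n} (hv : v (Fin.last (n + 1)) = 0) :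
    ofCoords (v 0) (fun i => v i.castSucc.succ) = v := by
  ext j
  refine Fin.cases rfl (fun i => ?_) j
  refine Fin.lastCases ?_ (fun i => ?_) i
  · simp [ofCoords, Fin.succ_last, hv]
  · simp [ofCoords]

lemma B_ofCoords_self (a : ℤ) (x : Fin n → ℤ) :
    B n (ofCoords a x) (ofCoords a x) = a ^ 2 - ∑ i, x i ^ 2 := by
  simp [B, ofCoords, Fin.sum_univ_castSucc, sq]

lemma B_ofCoords_K (a : ℤ) (x : Fin n → ℤ) :
    B n (ofCoords a x) (K n) = -3 * a - ∑ i, x i := by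
  simp [B, ofCoords, K, Fin.sum_univ_castSucc, Fin.succ_ne_zero]
  ring

lemma B_C (v : L n) : B n v (C n) = -v (Fin.last (n + 1)) := by
  simp [B, C, ← Fin.succ_last, (Fin.succ_ne_zero _).symm]

lemma isLine_iff {v : L n} :
    IsLine v ↔ ∃ a x, ∑ i, x i = 1 - 3 * a ∧ ∑ i, x i ^ 2 = a ^ 2 + 1 ∧ ofCoords a x = v := by
  constructor
  · rintro ⟨hself, hK, hC⟩
    have hlast : v (Fin.last (n + 1)) = 0 := by linarith [B_C v]
    rw [← eq_ofCoords hlast, B_ofCoords_self] at hself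
    rw [← eq_ofCoords hlast, B_ofCoords_K] at hK
    exact ⟨_, _, by linarith, by linarith, eq_ofCoords hlast⟩
  · rintro ⟨a, x, hsum, hsq, rfl⟩
    refine ⟨?_, ?_, ?_⟩
    · rw [B_ofCoords_self]; linarith
    · rw [B_ofCoords_K]; linarith
    · simp [B_C, ofCoords, ← Fin.succ_last]

lemma sum_add_indicator (c : ℤ) (S : Finset (Fin n)) :
    ∑ i, (c + if i ∈ S then 1 else 0) = n * c + #S := by
  simp [sum_add_distrib]

lemma sum_sq_add_indicator (c : ℤ) (S : Finset (Fin n)) :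
    ∑ i, (c + if i ∈ S then 1 else 0) ^ 2 = n * c ^ 2 + (2 * c + 1) * #S := by
  have hsq : ∀ i, (c + if i ∈ S then 1 else 0) ^ 2 =
      c ^ 2 + (2 * c + 1) * if i ∈ S then 1 else 0 := by
    intro i
    split_ifs <;> ring
  simp [hsq, sum_add_distrib, mul_comm]

lemma eq_add_indicator {c : ℤ} {x : Fin n → ℤ} (hx : ∀ i, x i = c ∨ x i = c + 1) :
    x = fun i => c + if i ∈ univ.filter (fun j => x j = c + 1) then 1 else 0 := by
  ext i
  rcases hx i with h | h <;> simp [h]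

lemma sq_sum_sub_le (x : Fin n → ℤ) (i : Fin n) :
    (∑ j, x j - x i) ^ 2 ≤ (n - 1) * (∑ j, x j ^ 2 - x i ^ 2) := by
  have h := sq_sum_le_card_mul_sum_sq (s := univ.erase i) (f := x)
  rwa [sum_erase_eq_sub (mem_univ i), sum_erase_eq_sub (mem_univ i),
    card_erase_of_mem (mem_univ i), card_univ, Fintype.card_fin,
    Nat.cast_sub i.pos, Nat.cast_one] at h

end

/-- The lines of `h`-degree `d = 0, 1, 2, 3` are `lᵢ`, `h - lᵢ - lⱼ`, `2h - l_{i₁} - ⋯ - l_{i₅}` and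
`3h - 2lᵢ - ∑_{j ≠ i} lⱼ`: their seven `lᵢ`-coefficients are `baseCoeff d`, raised by one at
`raisedCount d` places. -/
def baseCoeff : Fin 4 → ℤ := ![0, -1, -1, -2]

def raisedCount : Fin 4 → ℕ := ![1, 5, 2, 6]

lemma raisedCount_eq (d : Fin 4) : (raisedCount d : ℤ) = 1 - 3 * d - 7 * baseCoeff d := by
  fin_cases d <;> rfl

lemma baseCoeff_sq_add (d : Fin 4) :
    7 * baseCoeff d ^ 2 + (2 * baseCoeff d + 1) * raisedCount d = (d : ℤ) ^ 2 + 1 := by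
  fin_cases d <;> rfl

lemma degree_mem_Icc {a : ℤ} {x : Fin 7 → ℤ} (hsum : ∑ i, x i = 1 - 3 * a)
    (hsq : ∑ i, x i ^ 2 = a ^ 2 + 1) : 0 ≤ a ∧ a ≤ 3 := by
  have h := sq_sum_le_card_mul_sum_sq (s := univ) (f := x)
  simp only [hsum, hsq, card_univ, Fintype.card_fin, Nat.cast_ofNat] at h
  constructor
  · nlinarith [sq_nonneg (a + 1)]
  · nlinarith [sq_nonneg (a - 4)]

lemma coeff_eq_baseCoeff_or (d : Fin 4) {y : ℤ}
    (h : (1 - 3 * d - y) ^ 2 ≤ 6 * ((d : ℤ) ^ 2 + 1 - y ^ 2)) :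
    y = baseCoeff d ∨ y = baseCoeff d + 1 := by
  have hlo : -2 ≤ y := by nlinarith [d.is_lt]
  have hhi : y ≤ 1 := by nlinarith [d.is_lt]
  fin_cases d <;> interval_cases y <;> simp_all [baseCoeff]

def stdLine (p : Σ _ : Fin 4, Finset (Fin 7)) : L 7 :=
  ofCoords p.1 fun i => baseCoeff p.1 + if i ∈ p.2 then 1 else 0

def stdLineIndex : Finset (Σ _ : Fin 4, Finset (Fin 7)) :=
  univ.sigma fun d => powersetCard (raisedCount d) univ

lemma card_stdLineIndex : #stdLineIndex = 56 := by
  simp only [stdLineIndex, card_sigma, card_powersetCard, card_univ, Fintype.card_fin]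
  rfl

lemma stdLine_injective : Function.Injective stdLine := by
  rintro ⟨d, S⟩ ⟨d', S'⟩ h
  obtain ⟨hd, hx⟩ := ofCoords_inj.1 h
  obtain rfl : d = d' := Fin.ext (by exact_mod_cast hd)
  have hS : S = S' := by
    ext i
    have hi := congrFun hx i
    by_cases i ∈ S <;> by_cases i ∈ S' <;> simp_all
  rw [hS]

lemma isLine_stdLine {p : Σ _ : Fin 4, Finset (Fin 7)} (hp : p ∈ stdLineIndex) :
    IsLine (stdLine p) := by
  obtain ⟨d, S⟩ := p
  have hS : #S = raisedCount d := by simpa [stdLineIndex] using hp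
  refine isLine_iff.2 ⟨d, _, ?_, ?_, rfl⟩
  · rw [sum_add_indicator, hS, raisedCount_eq]
    push_cast
    ring
  · rw [sum_sq_add_indicator, hS, ← baseCoeff_sq_add]
    push_cast
    ring

lemma exists_stdLine_eq {v : L 7} (hv : IsLine v) : ∃ p ∈ stdLineIndex, stdLine p = v := by
  obtain ⟨a, x, hsum, hsq, rfl⟩ := isLine_iff.1 hv
  obtain ⟨ha₀, ha₃⟩ := degree_mem_Icc hsum hsq
  obtain ⟨d, rfl⟩ : ∃ d : Fin 4, ((d : ℕ) : ℤ) = a := ⟨⟨a.toNat, by omega⟩, by simp; omega⟩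
  have hx : ∀ i, x i = baseCoeff d ∨ x i = baseCoeff d + 1 := by
    intro i
    apply coeff_eq_baseCoeff_or d
    have h := sq_sum_sub_le x i
    rw [hsum, hsq] at h
    norm_num at h
    linarith
  set S := univ.filter fun i => x i = baseCoeff d + 1
  have hxS := eq_add_indicator hx
  refine ⟨⟨d, S⟩, ?_, by rw [stdLine, ← hxS]⟩
  have hS : (#S : ℤ) = raisedCount d := by
    rw [hxS, sum_add_indicator] at hsum
    rw [raisedCount_eq]
    push_cast at hsum
    linarith
  simp only [stdLineIndex, mem_sigma, mem_univ, mem_powersetCard, subset_univ, true_and]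
  exact_mod_cast hS

lemma setOf_isLine_eq : {v : L 7 | IsLine v} = stdLineIndex.image stdLine := by
  ext v
  simp only [Set.mem_ofPred_eq, coe_image, Set.mem_image, mem_coe]
  exact ⟨exists_stdLine_eq, fun ⟨_, hp, hv⟩ => hv ▸ isLine_stdLine hp⟩

/-- The set of lines on an `E_7`-surface, i.e. classes `v` with `B(v,v) = B(v,K) = -1`
and `B(v,C) = 0`, is finite with exactly 56 elements. -/
theorem E7_lines_card :
    {v : L 7 | B 7 v v = -1 ∧ B 7 v (K 7) = -1 ∧ B 7 v (C 7) = 0}.Finite ∧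
    {v : L 7 | B 7 v v = -1 ∧ B 7 v (K 7) = -1 ∧ B 7 v (C 7) = 0}.ncard
      = 56 := by
  change {v : L 7 | IsLine v}.Finite ∧ {v : L 7 | IsLine v}.ncard = 56
  rw [setOf_isLine_eq, Set.ncard_coe_finset, card_image_of_injective _ stdLine_injective]
  exact ⟨finite_toSet _, card_stdLineIndex⟩

end ADEPaper
end
end

section
/- The set of lines {v ∈ L : B(v,v) = −1, B(v,K) = −1, B(v,C) = 0} is finite and has exactly 240 elements. -/
noncomputable section
namespace ADEPaper

theorem B_expand (v w : L 8) : B 8 v w = v 0 * w 0 - (v 1 * w 1 + v 2 * w 2 + v 3 * w 3 + v 4 * w 4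
    + v 5 * w 5 + v 6 * w 6 + v 7 * w 7 + v 8 * w 8 + v 9 * w 9) := by
  simp only [B, Fin.sum_univ_succ, Fin.sum_univ_zero,
    show ((0:Fin 9).succ) = (1:Fin 10) by decide,
    show ((0:Fin 8).succ.succ) = (2:Fin 10) by decide,
    show ((0:Fin 7).succ.succ.succ) = (3:Fin 10) by decide,
    show ((0:Fin 6).succ.succ.succ.succ) = (4:Fin 10) by decide,
    show ((0:Fin 5).succ.succ.succ.succ.succ) = (5:Fin 10) by decide,
    show ((0:Fin 4).succ.succ.succ.succ.succ.succ) = (6:Fin 10) by decide,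
    show ((0:Fin 3).succ.succ.succ.succ.succ.succ.succ) = (7:Fin 10) by decide,
    show ((0:Fin 2).succ.succ.succ.succ.succ.succ.succ.succ = (8:Fin 10)) by decide,
    show ((0:Fin 1).succ.succ.succ.succ.succ.succ.succ.succ.succ = (9:Fin 10)) by decide]
  ring

theorem sq3 (x : ℤ) (h : x^2 ≤ 3) : -1 ≤ x ∧ x ≤ 1 := by
  constructor <;> nlinarith

theorem sum3 (x1 x2 x3 x4 x5 x6 x7 x8 : ℤ)
    (h : x1^2+x2^2+x3^2+x4^2+x5^2+x6^2+x7^2+x8^2 ≤ 3) :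
    (-1 ≤ x1 ∧ x1 ≤ 1) ∧ (-1 ≤ x2 ∧ x2 ≤ 1) ∧ (-1 ≤ x3 ∧ x3 ≤ 1) ∧ (-1 ≤ x4 ∧ x4 ≤ 1) ∧
    (-1 ≤ x5 ∧ x5 ≤ 1) ∧ (-1 ≤ x6 ∧ x6 ≤ 1) ∧ (-1 ≤ x7 ∧ x7 ≤ 1) ∧ (-1 ≤ x8 ∧ x8 ≤ 1) := by
  refine ⟨sq3 _ ?_, sq3 _ ?_, sq3 _ ?_, sq3 _ ?_, sq3 _ ?_, sq3 _ ?_, sq3 _ ?_, sq3 _ ?_⟩ <;>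
    nlinarith [sq_nonneg x1, sq_nonneg x2, sq_nonneg x3, sq_nonneg x4, sq_nonneg x5,
      sq_nonneg x6, sq_nonneg x7, sq_nonneg x8]

def lo (a : ℤ) : ℤ := if a ≤ 1 then -1 else if a ≤ 4 then -2 else -3

set_option maxHeartbeats 1000000 in
theorem main_bounds (a c1 c2 c3 c4 c5 c6 c7 c8 : ℤ)
    (h1 : a*a - (c1*c1+c2*c2+c3*c3+c4*c4+c5*c5+c6*c6+c7*c7+c8*c8) = -1)
    (h2 : -3*a - (c1+c2+c3+c4+c5+c6+c7+c8) = -1) :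
    (-1 ≤ a ∧ a ≤ 7) ∧
    (lo a ≤ c1 ∧ c1 ≤ lo a + 2) ∧ (lo a ≤ c2 ∧ c2 ≤ lo a + 2) ∧
    (lo a ≤ c3 ∧ c3 ≤ lo a + 2) ∧ (lo a ≤ c4 ∧ c4 ≤ lo a + 2) ∧
    (lo a ≤ c5 ∧ c5 ≤ lo a + 2) ∧ (lo a ≤ c6 ∧ c6 ≤ lo a + 2) ∧
    (lo a ≤ c7 ∧ c7 ≤ lo a + 2) ∧ (lo a ≤ c8 ∧ c8 ≤ lo a + 2) := by
  have hcs : (c1+c2+c3+c4+c5+c6+c7+c8)^2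
      ≤ 8*(c1*c1+c2*c2+c3*c3+c4*c4+c5*c5+c6*c6+c7*c7+c8*c8) := by
    linarith [sq_nonneg (c1-c2), sq_nonneg (c1-c3), sq_nonneg (c1-c4), sq_nonneg (c1-c5),
      sq_nonneg (c1-c6), sq_nonneg (c1-c7), sq_nonneg (c1-c8), sq_nonneg (c2-c3),
      sq_nonneg (c2-c4), sq_nonneg (c2-c5), sq_nonneg (c2-c6), sq_nonneg (c2-c7),
      sq_nonneg (c2-c8), sq_nonneg (c3-c4), sq_nonneg (c3-c5), sq_nonneg (c3-c6),
      sq_nonneg (c3-c7), sq_nonneg (c3-c8), sq_nonneg (c4-c5), sq_nonneg (c4-c6),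
      sq_nonneg (c4-c7), sq_nonneg (c4-c8), sq_nonneg (c5-c6), sq_nonneg (c5-c7),
      sq_nonneg (c5-c8), sq_nonneg (c6-c7), sq_nonneg (c6-c8), sq_nonneg (c7-c8)]
  have key : (1-3*a)^2 ≤ 8*(a*a+1) := by
    rw [show (1-3*a) = c1+c2+c3+c4+c5+c6+c7+c8 by linarith,
        show a*a+1 = c1*c1+c2*c2+c3*c3+c4*c4+c5*c5+c6*c6+c7*c7+c8*c8 by linarith]
    exact hcs
  have ha : -1 ≤ a ∧ a ≤ 7 := by constructor <;> nlinarith [key]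
  refine ⟨ha, ?_⟩
  obtain ⟨haL, haU⟩ := ha
  interval_cases a <;> [
    (obtain h := sum3 c1 c2 c3 c4 c5 c6 c7 c8 (by linarith));
    (obtain h := sum3 c1 c2 c3 c4 c5 c6 c7 c8 (by linarith));
    (obtain h := sum3 c1 c2 c3 c4 c5 c6 c7 c8 (by linarith));
    (obtain h := sum3 (c1+1) (c2+1) (c3+1) (c4+1) (c5+1) (c6+1) (c7+1) (c8+1) (by linarith));
    (obtain h := sum3 (c1+1) (c2+1) (c3+1) (c4+1) (c5+1) (c6+1) (c7+1) (c8+1) (by linarith));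
    (obtain h := sum3 (c1+1) (c2+1) (c3+1) (c4+1) (c5+1) (c6+1) (c7+1) (c8+1) (by linarith));
    (obtain h := sum3 (c1+2) (c2+2) (c3+2) (c4+2) (c5+2) (c6+2) (c7+2) (c8+2) (by linarith));
    (obtain h := sum3 (c1+2) (c2+2) (c3+2) (c4+2) (c5+2) (c6+2) (c7+2) (c8+2) (by linarith));
    (obtain h := sum3 (c1+2) (c2+2) (c3+2) (c4+2) (c5+2) (c6+2) (c7+2) (c8+2) (by linarith))] <;>
  · simp only [lo]
    norm_num
    omega

/-! ### The finite enumeration -/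

def mk (a : ℤ) (c : Fin 8 → ℤ) : L 8 := Fin.cons a (Fin.snoc c 0)

abbrev T7 : Type := ℤ×ℤ×ℤ×ℤ×ℤ×ℤ×ℤ

def I (a : ℤ) : Finset ℤ := Finset.Icc (lo a) (lo a + 2)

def box (a : ℤ) : Finset T7 := I a ×ˢ I a ×ˢ I a ×ˢ I a ×ˢ I a ×ˢ I a ×ˢ I a

def Q (a : ℤ) (p : T7) : Prop :=
  (lo a ≤ 1 - 3*a - (p.1 + p.2.1 + p.2.2.1 + p.2.2.2.1 + p.2.2.2.2.1 + p.2.2.2.2.2.1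
      + p.2.2.2.2.2.2) ∧
    1 - 3*a - (p.1 + p.2.1 + p.2.2.1 + p.2.2.2.1 + p.2.2.2.2.1 + p.2.2.2.2.2.1
      + p.2.2.2.2.2.2) ≤ lo a + 2) ∧
  a*a - (p.1*p.1 + p.2.1*p.2.1 + p.2.2.1*p.2.2.1 + p.2.2.2.1*p.2.2.2.1
    + p.2.2.2.2.1*p.2.2.2.2.1 + p.2.2.2.2.2.1*p.2.2.2.2.2.1
    + p.2.2.2.2.2.2*p.2.2.2.2.2.2
    + (1 - 3*a - (p.1 + p.2.1 + p.2.2.1 + p.2.2.2.1 + p.2.2.2.2.1 + p.2.2.2.2.2.1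
        + p.2.2.2.2.2.2))
      * (1 - 3*a - (p.1 + p.2.1 + p.2.2.1 + p.2.2.2.1 + p.2.2.2.2.1 + p.2.2.2.2.2.1
        + p.2.2.2.2.2.2))) = -1

instance (a : ℤ) : DecidablePred (Q a) := fun p => by unfold Q; infer_instance

def bigbox : Finset ((_ : ℤ) × T7) := (Finset.Icc (-1 : ℤ) 7).sigma fun a => box a

def Qs (p : (_ : ℤ) × T7) : Prop := Q p.1 p.2

instance : DecidablePred Qs := fun p => by unfold Qs; infer_instance

def vec (p : (_ : ℤ) × T7) : L 8 :=
  mk p.1 ![p.2.1, p.2.2.1, p.2.2.2.1, p.2.2.2.2.1, p.2.2.2.2.2.1, p.2.2.2.2.2.2.1,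
    p.2.2.2.2.2.2.2,
    1 - 3*p.1 - (p.2.1 + p.2.2.1 + p.2.2.2.1 + p.2.2.2.2.1 + p.2.2.2.2.2.1
      + p.2.2.2.2.2.2.1 + p.2.2.2.2.2.2.2)]

theorem vec_injective : Function.Injective vec := by
  rintro ⟨a, c1, c2, c3, c4, c5, c6, c7⟩ ⟨b, d1, d2, d3, d4, d5, d6, d7⟩ h
  have e0 : a = b := congrFun h 0
  have e1 : c1 = d1 := congrFun h 1
  have e2 : c2 = d2 := congrFun h 2
  have e3 : c3 = d3 := congrFun h 3
  have e4 : c4 = d4 := congrFun h 4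
  have e5 : c5 = d5 := congrFun h 5
  have e6 : c6 = d6 := congrFun h 6
  have e7 : c7 = d7 := congrFun h 7
  subst e0; subst e1; subst e2; subst e3; subst e4; subst e5; subst e6; subst e7
  rfl

def emb : ((_ : ℤ) × T7) ↪ L 8 := ⟨vec, vec_injective⟩

def S : Finset (L 8) := (bigbox.filter Qs).map emb

theorem vec_eval (p : (_ : ℤ) × T7) :
    vec p 0 = p.1 ∧ vec p 1 = p.2.1 ∧ vec p 2 = p.2.2.1 ∧ vec p 3 = p.2.2.2.1 ∧
    vec p 4 = p.2.2.2.2.1 ∧ vec p 5 = p.2.2.2.2.2.1 ∧ vec p 6 = p.2.2.2.2.2.2.1 ∧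
    vec p 7 = p.2.2.2.2.2.2.2 ∧
    vec p 8 = 1 - 3*p.1 - (p.2.1 + p.2.2.1 + p.2.2.2.1 + p.2.2.2.2.1 + p.2.2.2.2.2.1
      + p.2.2.2.2.2.2.1 + p.2.2.2.2.2.2.2) ∧
    vec p 9 = 0 :=
  ⟨rfl, rfl, rfl, rfl, rfl, rfl, rfl, rfl, rfl, rfl⟩

theorem B_vec_self (p : (_ : ℤ) × T7) :
    B 8 (vec p) (vec p) = p.1*p.1 - (p.2.1*p.2.1 + p.2.2.1*p.2.2.1 + p.2.2.2.1*p.2.2.2.1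
      + p.2.2.2.2.1*p.2.2.2.2.1 + p.2.2.2.2.2.1*p.2.2.2.2.2.1
      + p.2.2.2.2.2.2.1*p.2.2.2.2.2.2.1 + p.2.2.2.2.2.2.2*p.2.2.2.2.2.2.2
      + (1 - 3*p.1 - (p.2.1 + p.2.2.1 + p.2.2.2.1 + p.2.2.2.2.1 + p.2.2.2.2.2.1
          + p.2.2.2.2.2.2.1 + p.2.2.2.2.2.2.2))
        * (1 - 3*p.1 - (p.2.1 + p.2.2.1 + p.2.2.2.1 + p.2.2.2.2.1 + p.2.2.2.2.2.1
          + p.2.2.2.2.2.2.1 + p.2.2.2.2.2.2.2))) := by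
  obtain ⟨e0, e1, e2, e3, e4, e5, e6, e7, e8, e9⟩ := vec_eval p
  rw [B_expand, e0, e1, e2, e3, e4, e5, e6, e7, e8, e9]
  ring

theorem B_vec_K (p : (_ : ℤ) × T7) : B 8 (vec p) (K 8) = -1 := by
  obtain ⟨e0, e1, e2, e3, e4, e5, e6, e7, e8, e9⟩ := vec_eval p
  rw [B_expand, e0, e1, e2, e3, e4, e5, e6, e7, e8, e9]
  simp only [show (K 8) 0 = -3 by decide, show (K 8) 1 = 1 by decide,
    show (K 8) 2 = 1 by decide, show (K 8) 3 = 1 by decide, show (K 8) 4 = 1 by decide,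
    show (K 8) 5 = 1 by decide, show (K 8) 6 = 1 by decide, show (K 8) 7 = 1 by decide,
    show (K 8) 8 = 1 by decide, show (K 8) 9 = 1 by decide]
  ring

theorem B_vec_C (p : (_ : ℤ) × T7) : B 8 (vec p) (C 8) = 0 := by
  obtain ⟨e0, e1, e2, e3, e4, e5, e6, e7, e8, e9⟩ := vec_eval p
  rw [B_expand, e0, e1, e2, e3, e4, e5, e6, e7, e8, e9]
  simp only [show (C 8) 0 = 0 by decide, show (C 8) 1 = 0 by decide,
    show (C 8) 2 = 0 by decide, show (C 8) 3 = 0 by decide, show (C 8) 4 = 0 by decide,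
    show (C 8) 5 = 0 by decide, show (C 8) 6 = 0 by decide, show (C 8) 7 = 0 by decide,
    show (C 8) 8 = 0 by decide, show (C 8) 9 = 1 by decide]
  ring

theorem set_eq :
    {v : L 8 | B 8 v v = -1 ∧ B 8 v (K 8) = -1 ∧ B 8 v (C 8) = 0} = ↑S := by
  ext v
  constructor
  · rintro ⟨h1, h2, h3⟩
    have e1 := h1; have e2 := h2; have e3 := h3
    rw [B_expand] at e1 e2 e3
    simp only [show (K 8) 0 = -3 by decide, show (K 8) 1 = 1 by decide,
      show (K 8) 2 = 1 by decide, show (K 8) 3 = 1 by decide, show (K 8) 4 = 1 by decide,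
      show (K 8) 5 = 1 by decide, show (K 8) 6 = 1 by decide, show (K 8) 7 = 1 by decide,
      show (K 8) 8 = 1 by decide, show (K 8) 9 = 1 by decide] at e2
    simp only [show (C 8) 0 = 0 by decide, show (C 8) 1 = 0 by decide,
      show (C 8) 2 = 0 by decide, show (C 8) 3 = 0 by decide, show (C 8) 4 = 0 by decide,
      show (C 8) 5 = 0 by decide, show (C 8) 6 = 0 by decide, show (C 8) 7 = 0 by decide,
      show (C 8) 8 = 0 by decide, show (C 8) 9 = 1 by decide] at e3
    have h9 : v 9 = 0 := by linarith
    rw [h9] at e1 e2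
    have H1 : v 0 * v 0 - (v 1 * v 1 + v 2 * v 2 + v 3 * v 3 + v 4 * v 4 + v 5 * v 5
        + v 6 * v 6 + v 7 * v 7 + v 8 * v 8) = -1 := by linarith
    have H2 : -3 * v 0 - (v 1 + v 2 + v 3 + v 4 + v 5 + v 6 + v 7 + v 8) = -1 := by linarith
    obtain ⟨ha, hb1, hb2, hb3, hb4, hb5, hb6, hb7, hb8⟩ :=
      main_bounds (v 0) (v 1) (v 2) (v 3) (v 4) (v 5) (v 6) (v 7) (v 8) H1 H2
    have hc8 : 1 - 3*(v 0) - (v 1 + v 2 + v 3 + v 4 + v 5 + v 6 + v 7) = v 8 := by linarith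
    have hveq : vec ⟨v 0, (v 1, v 2, v 3, v 4, v 5, v 6, v 7)⟩ = v := by
      funext j
      fin_cases j <;> first
        | rfl
        | (show (0:ℤ) = v 9; exact h9.symm)
        | (show 1 - 3*(v 0) - (v 1 + v 2 + v 3 + v 4 + v 5 + v 6 + v 7) = v 8; exact hc8)
    refine Finset.mem_coe.2 (Finset.mem_map.2
      ⟨⟨v 0, (v 1, v 2, v 3, v 4, v 5, v 6, v 7)⟩,
        Finset.mem_filter.2 ⟨Finset.mem_sigma.2 ⟨Finset.mem_Icc.2 ha, ?_⟩, ?_⟩, hveq⟩)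
    · exact Finset.mem_product.2 ⟨Finset.mem_Icc.2 hb1, Finset.mem_product.2
        ⟨Finset.mem_Icc.2 hb2, Finset.mem_product.2 ⟨Finset.mem_Icc.2 hb3,
          Finset.mem_product.2 ⟨Finset.mem_Icc.2 hb4, Finset.mem_product.2
            ⟨Finset.mem_Icc.2 hb5, Finset.mem_product.2
              ⟨Finset.mem_Icc.2 hb6, Finset.mem_Icc.2 hb7⟩⟩⟩⟩⟩⟩
    · show (lo (v 0) ≤ 1 - 3*(v 0) - (v 1 + v 2 + v 3 + v 4 + v 5 + v 6 + v 7) ∧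
          1 - 3*(v 0) - (v 1 + v 2 + v 3 + v 4 + v 5 + v 6 + v 7) ≤ lo (v 0) + 2) ∧
        v 0 * v 0 - (v 1 * v 1 + v 2 * v 2 + v 3 * v 3 + v 4 * v 4 + v 5 * v 5 + v 6 * v 6
          + v 7 * v 7
          + (1 - 3*(v 0) - (v 1 + v 2 + v 3 + v 4 + v 5 + v 6 + v 7))
            * (1 - 3*(v 0) - (v 1 + v 2 + v 3 + v 4 + v 5 + v 6 + v 7))) = -1
      rw [hc8]
      exact ⟨hb8, by linarith⟩
  · intro hv
    obtain ⟨p, hp, hpv⟩ := Finset.mem_map.1 (Finset.mem_coe.1 hv)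
    obtain ⟨-, -, hq⟩ := Finset.mem_filter.1 hp
    have hpv' : vec p = v := hpv
    rw [← hpv']
    refine ⟨?_, B_vec_K p, B_vec_C p⟩
    rw [B_vec_self]
    exact hq

set_option maxRecDepth 1000000 in
set_option maxHeartbeats 8000000 in
theorem cnt_m1 : ((box (-1)).filter (Q (-1))).card = 0 := by decide
set_option maxRecDepth 1000000 in
set_option maxHeartbeats 8000000 in
theorem cnt_0 : ((box 0).filter (Q 0)).card = 8 := by decide
set_option maxRecDepth 1000000 in
set_option maxHeartbeats 8000000 in
theorem cnt_1 : ((box 1).filter (Q 1)).card = 28 := by decide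
set_option maxRecDepth 1000000 in
set_option maxHeartbeats 8000000 in
theorem cnt_2 : ((box 2).filter (Q 2)).card = 56 := by decide
set_option maxRecDepth 1000000 in
set_option maxHeartbeats 8000000 in
theorem cnt_3 : ((box 3).filter (Q 3)).card = 56 := by decide
set_option maxRecDepth 1000000 in
set_option maxHeartbeats 8000000 in
theorem cnt_4 : ((box 4).filter (Q 4)).card = 56 := by decide
set_option maxRecDepth 1000000 in
set_option maxHeartbeats 8000000 in
theorem cnt_5 : ((box 5).filter (Q 5)).card = 28 := by decide
set_option maxRecDepth 1000000 in
set_option maxHeartbeats 8000000 in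
theorem cnt_6 : ((box 6).filter (Q 6)).card = 8 := by decide
set_option maxRecDepth 1000000 in
set_option maxHeartbeats 8000000 in
theorem cnt_7 : ((box 7).filter (Q 7)).card = 0 := by decide

theorem hsplit : bigbox.filter Qs
    = (Finset.Icc (-1:ℤ) 7).sigma (fun a => (box a).filter (Q a)) := by
  ext ⟨a, c⟩
  simp [bigbox, Qs, Finset.mem_sigma, Finset.mem_filter]
  tauto

theorem card_S : S.card = 240 := by
  rw [S, Finset.card_map, hsplit, Finset.card_sigma]
  rw [show (Finset.Icc (-1:ℤ) 7) = ({-1,0,1,2,3,4,5,6,7} : Finset ℤ) from by decide]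
  rw [Finset.sum_insert (by decide), Finset.sum_insert (by decide),
    Finset.sum_insert (by decide), Finset.sum_insert (by decide),
    Finset.sum_insert (by decide), Finset.sum_insert (by decide),
    Finset.sum_insert (by decide), Finset.sum_insert (by decide), Finset.sum_singleton]
  norm_num [cnt_m1, cnt_0, cnt_1, cnt_2, cnt_3, cnt_4, cnt_5, cnt_6, cnt_7]

/-- The set of lines on an `E_8`-surface, i.e. classes `v` with `B(v,v) = B(v,K) = -1`
and `B(v,C) = 0`, is finite with exactly 240 elements. -/
theorem E8_lines_card :
    {v : L 8 | B 8 v v = -1 ∧ B 8 v (K 8) = -1 ∧ B 8 v (C 8) = 0}.Finite ∧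
    {v : L 8 | B 8 v v = -1 ∧ B 8 v (K 8) = -1 ∧ B 8 v (C 8) = 0}.ncard
      = 240 := by
  rw [set_eq]
  exact ⟨S.finite_toSet, by rw [Set.ncard_coe_finset, card_S]⟩

end ADEPaper
end
end

section
/- The set of rulings {v ∈ L : B(v,v) = 0, B(v,K) = −2, B(v,C) = 0} is finite and has exactly 126 elements. -/
noncomputable section
namespace ADEPaper

lemma fs2 : (Fin.succ 2 : Fin 9) = 3 := by decide
lemma fs3 : (Fin.succ 3 : Fin 9) = 4 := by decide
lemma fs4 : (Fin.succ 4 : Fin 9) = 5 := by decide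
lemma fs5 : (Fin.succ 5 : Fin 9) = 6 := by decide
lemma fs6 : (Fin.succ 6 : Fin 9) = 7 := by decide
lemma fs7 : (Fin.succ 7 : Fin 9) = 8 := by decide
lemma fl8 : (Fin.last 8 : Fin 9) = 8 := by decide

lemma Bvv (v : L 7) : B 7 v v = v 0 * v 0 - (v 1 * v 1 + v 2 * v 2 + v 3 * v 3 + v 4 * v 4
    + v 5 * v 5 + v 6 * v 6 + v 7 * v 7 + v 8 * v 8) := by
  simp [B, Fin.sum_univ_eight, fs2, fs3, fs4, fs5, fs6, fs7]

lemma BvK (v : L 7) : B 7 v (K 7) = -3 * v 0 - (v 1 + v 2 + v 3 + v 4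
    + v 5 + v 6 + v 7 + v 8) := by
  simp [B, K, Fin.sum_univ_eight, fs2, fs3, fs4, fs5, fs6, fs7]
  ring

lemma BvC (v : L 7) : B 7 v (C 7) = - v 8 := by
  simp [B, C, Fin.sum_univ_eight, fs2, fs3, fs4, fs5, fs6, fs7, fl8]

abbrev T8 := ℤ × ℤ × ℤ × ℤ × ℤ × ℤ × ℤ × ℤ

/-- coordinates into a lattice vector, with last coordinate 0 -/
def eT (t : T8) : L 7 := fun j =>
  if j = 0 then t.1 else if j = 1 then t.2.1 else if j = 2 then t.2.2.1
  else if j = 3 then t.2.2.2.1 else if j = 4 then t.2.2.2.2.1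
  else if j = 5 then t.2.2.2.2.2.1 else if j = 6 then t.2.2.2.2.2.2.1
  else if j = 7 then t.2.2.2.2.2.2.2 else 0

lemma eT0 (t : T8) : eT t 0 = t.1 := rfl
lemma eT1 (t : T8) : eT t 1 = t.2.1 := rfl
lemma eT2 (t : T8) : eT t 2 = t.2.2.1 := rfl
lemma eT3 (t : T8) : eT t 3 = t.2.2.2.1 := rfl
lemma eT4 (t : T8) : eT t 4 = t.2.2.2.2.1 := rfl
lemma eT5 (t : T8) : eT t 5 = t.2.2.2.2.2.1 := rfl
lemma eT6 (t : T8) : eT t 6 = t.2.2.2.2.2.2.1 := rfl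
lemma eT7 (t : T8) : eT t 7 = t.2.2.2.2.2.2.2 := rfl
lemma eT8 (t : T8) : eT t 8 = 0 := rfl

lemma eT_inj : Function.Injective eT := by
  rintro ⟨a,m0,m1,m2,m3,m4,m5,m6⟩ ⟨a',n0,n1,n2,n3,n4,n5,n6⟩ h
  have h0 := congrFun h 0
  have h1 := congrFun h 1
  have h2 := congrFun h 2
  have h3 := congrFun h 3
  have h4 := congrFun h 4
  have h5 := congrFun h 5
  have h6 := congrFun h 6
  have h7 := congrFun h 7
  simp only [eT0, eT1, eT2, eT3, eT4, eT5, eT6, eT7] at h0 h1 h2 h3 h4 h5 h6 h7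
  simp_all

def pp (t : T8) : Prop :=
  t.1 * t.1 = t.2.1*t.2.1 + t.2.2.1*t.2.2.1 + t.2.2.2.1*t.2.2.2.1 + t.2.2.2.2.1*t.2.2.2.2.1
    + t.2.2.2.2.2.1*t.2.2.2.2.2.1 + t.2.2.2.2.2.2.1*t.2.2.2.2.2.2.1
    + t.2.2.2.2.2.2.2*t.2.2.2.2.2.2.2 ∧
  t.2.1 + t.2.2.1 + t.2.2.2.1 + t.2.2.2.2.1 + t.2.2.2.2.2.1 + t.2.2.2.2.2.2.1
    + t.2.2.2.2.2.2.2 = 2 - 3 * t.1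

instance : DecidablePred pp := fun t => by unfold pp; exact inferInstance

open Finset in
def FF : Finset T8 :=
  Icc 1 5 ×ˢ Icc (-2) 0 ×ˢ Icc (-2) 0 ×ˢ Icc (-2) 0 ×ˢ Icc (-2) 0 ×ˢ Icc (-2) 0 ×ˢ
    Icc (-2) 0 ×ˢ Icc (-2) 0

/-- Cauchy–Schwarz for six integers. -/
lemma cs6 (m1 m2 m3 m4 m5 m6 : ℤ) :
    (m1+m2+m3+m4+m5+m6) * (m1+m2+m3+m4+m5+m6)
      ≤ 6 * (m1*m1+m2*m2+m3*m3+m4*m4+m5*m5+m6*m6) := by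
  nlinarith [sq_nonneg (m1-m2), sq_nonneg (m1-m3), sq_nonneg (m1-m4), sq_nonneg (m1-m5),
    sq_nonneg (m1-m6), sq_nonneg (m2-m3), sq_nonneg (m2-m4), sq_nonneg (m2-m5),
    sq_nonneg (m2-m6), sq_nonneg (m3-m4), sq_nonneg (m3-m5), sq_nonneg (m3-m6),
    sq_nonneg (m4-m5), sq_nonneg (m4-m6), sq_nonneg (m5-m6)]

/-- Cauchy–Schwarz for seven integers. -/
lemma cs7 (m0 m1 m2 m3 m4 m5 m6 : ℤ) :
    (m0+m1+m2+m3+m4+m5+m6) * (m0+m1+m2+m3+m4+m5+m6)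
      ≤ 7 * (m0*m0+m1*m1+m2*m2+m3*m3+m4*m4+m5*m5+m6*m6) := by
  nlinarith [sq_nonneg (m0-m1), sq_nonneg (m0-m2), sq_nonneg (m0-m3), sq_nonneg (m0-m4),
    sq_nonneg (m0-m5), sq_nonneg (m0-m6),
    sq_nonneg (m1-m2), sq_nonneg (m1-m3), sq_nonneg (m1-m4), sq_nonneg (m1-m5),
    sq_nonneg (m1-m6), sq_nonneg (m2-m3), sq_nonneg (m2-m4), sq_nonneg (m2-m5),
    sq_nonneg (m2-m6), sq_nonneg (m3-m4), sq_nonneg (m3-m5), sq_nonneg (m3-m6),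
    sq_nonneg (m4-m5), sq_nonneg (m4-m6), sq_nonneg (m5-m6)]

lemma a_bounds (a m0 m1 m2 m3 m4 m5 m6 : ℤ)
    (hq : m0*m0+m1*m1+m2*m2+m3*m3+m4*m4+m5*m5+m6*m6 = a*a)
    (hs : m0+m1+m2+m3+m4+m5+m6 = 2-3*a) : 1 ≤ a ∧ a ≤ 5 := by
  have h := cs7 m0 m1 m2 m3 m4 m5 m6
  rw [hq, hs] at h
  constructor
  · by_contra hc
    push_neg at hc
    nlinarith [sq_nonneg a]
  · by_contra hc
    push_neg at hc
    nlinarith [mul_nonneg (by linarith : (0:ℤ) ≤ a) (by linarith : (0:ℤ) ≤ a - 6)]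

lemma coord_bound (a x m1 m2 m3 m4 m5 m6 : ℤ)
    (hq : x*x+m1*m1+m2*m2+m3*m3+m4*m4+m5*m5+m6*m6 = a*a)
    (hs : x+m1+m2+m3+m4+m5+m6 = 2-3*a)
    (ha1 : 1 ≤ a) (ha5 : a ≤ 5) : -2 ≤ x ∧ x ≤ 0 := by
  have h := cs6 m1 m2 m3 m4 m5 m6
  have e1 : m1+m2+m3+m4+m5+m6 = 2-3*a-x := by linarith
  have e2 : m1*m1+m2*m2+m3*m3+m4*m4+m5*m5+m6*m6 = a*a - x*x := by linarith
  rw [e1, e2] at h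
  constructor
  · by_contra hc
    push_neg at hc
    nlinarith [sq_nonneg (x+3), sq_nonneg (a-5),
      mul_nonneg (by linarith : (0:ℤ) ≤ 5 - a) (by linarith : (0:ℤ) ≤ -3 - x)]
  · by_contra hc
    push_neg at hc
    nlinarith [sq_nonneg (a-1), sq_nonneg (x-1),
      mul_nonneg (by linarith : (0:ℤ) ≤ a - 1) (by linarith : (0:ℤ) ≤ x - 1)]

set_option maxRecDepth 100000 in
set_option maxHeartbeats 8000000 in
lemma cardFF : (FF.filter pp).card = 126 := by decide

/-- The set of rulings on an `E_7`-surface, i.e. classes `v` with `B(v,v) = 0`,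
`B(v,K) = -2` and `B(v,C) = 0`, is finite with exactly 126 elements. -/
theorem E7_rulings_card :
    {v : L 7 | B 7 v v = 0 ∧ B 7 v (K 7) = -2 ∧ B 7 v (C 7) = 0}.Finite ∧
    {v : L 7 | B 7 v v = 0 ∧ B 7 v (K 7) = -2 ∧ B 7 v (C 7) = 0}.ncard
      = 126 := by
  have hset : {v : L 7 | B 7 v v = 0 ∧ B 7 v (K 7) = -2 ∧ B 7 v (C 7) = 0}
      = eT '' ↑(FF.filter pp) := by
    ext v
    simp only [Set.mem_setOf_eq, Set.mem_image, Finset.mem_coe, Finset.mem_filter]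
    constructor
    · rintro ⟨h1, h2, h3⟩
      rw [Bvv] at h1
      rw [BvK] at h2
      rw [BvC, neg_eq_zero] at h3
      rw [h3] at h1 h2
      refine ⟨(v 0, v 1, v 2, v 3, v 4, v 5, v 6, v 7), ⟨?_, ?_⟩, ?_⟩
      · -- membership in FF
        have hq : v 1*v 1+v 2*v 2+v 3*v 3+v 4*v 4+v 5*v 5+v 6*v 6+v 7*v 7 = v 0*v 0 := by
          nlinarith [h1]
        have hs : v 1+v 2+v 3+v 4+v 5+v 6+v 7 = 2-3*v 0 := by linarith
        obtain ⟨ha1, ha5⟩ := a_bounds _ _ _ _ _ _ _ _ hq hs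
        have b1 := coord_bound _ _ _ _ _ _ _ _ hq hs ha1 ha5
        have b2 := coord_bound (v 0) (v 2) (v 1) (v 3) (v 4) (v 5) (v 6) (v 7)
          (by linarith) (by linarith) ha1 ha5
        have b3 := coord_bound (v 0) (v 3) (v 1) (v 2) (v 4) (v 5) (v 6) (v 7)
          (by linarith) (by linarith) ha1 ha5
        have b4 := coord_bound (v 0) (v 4) (v 1) (v 2) (v 3) (v 5) (v 6) (v 7)
          (by linarith) (by linarith) ha1 ha5
        have b5 := coord_bound (v 0) (v 5) (v 1) (v 2) (v 3) (v 4) (v 6) (v 7)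
          (by linarith) (by linarith) ha1 ha5
        have b6 := coord_bound (v 0) (v 6) (v 1) (v 2) (v 3) (v 4) (v 5) (v 7)
          (by linarith) (by linarith) ha1 ha5
        have b7 := coord_bound (v 0) (v 7) (v 1) (v 2) (v 3) (v 4) (v 5) (v 6)
          (by linarith) (by linarith) ha1 ha5
        simp only [FF, Finset.mem_product, Finset.mem_Icc]
        refine ⟨⟨ha1, ha5⟩, ⟨b1.1, b1.2⟩, ⟨b2.1, b2.2⟩, ⟨b3.1, b3.2⟩, ⟨b4.1, b4.2⟩,
          ⟨b5.1, b5.2⟩, ⟨b6.1, b6.2⟩, b7.1, b7.2⟩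
      · -- the equations
        unfold pp
        constructor
        · nlinarith [h1]
        · linarith
      · -- eT of the tuple equals v
        funext j
        fin_cases j
        · exact eT0 _
        · exact eT1 _
        · exact eT2 _
        · exact eT3 _
        · exact eT4 _
        · exact eT5 _
        · exact eT6 _
        · exact eT7 _
        · exact (eT8 _).trans h3.symm
    · rintro ⟨t, ⟨htF, htp⟩, rfl⟩
      obtain ⟨hq, hs⟩ := htp
      refine ⟨?_, ?_, ?_⟩
      · rw [Bvv, eT0, eT1, eT2, eT3, eT4, eT5, eT6, eT7, eT8]
        nlinarith [hq]
      · rw [BvK, eT0, eT1, eT2, eT3, eT4, eT5, eT6, eT7, eT8]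
        linarith
      · rw [BvC, eT8, neg_zero]
  rw [hset]
  constructor
  · exact Set.Finite.image _ (Finset.finite_toSet _)
  · rw [Set.ncard_image_of_injective _ eT_inj, Set.ncard_coe_finset, cardFF]

end ADEPaper
end
end
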